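/- arXiv:2004.09261 — 3 statements merged into one kernel-verified Lean document; each statement's English description precedes it below -/
import Mathlib

section
/- Let v ∈ [0,1)^𝑁 and u ∈ [0, ρ(v)). Define H(x) = B_𝑁(x,v) + B̄_𝑁(x) − b_1·x, y_0(t) = u for all t ≥ 0, and recursively y_{n+1}(t) = e^{b_1 t}·(u + ∫_0^t e^{−b_1 s} H(y_n(s)) ds). Then for every n ≥ 0 and every t ≥ 0 one has u ≤ y_n(t) < ρ(v) and y_{n+1}(t) ≥ y_n(t). -/
/-!
The function `H` is a power series with nonnegative coefficients, hence continuous and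
nondecreasing on `[0, 1]`. Since `ρ(v)` is a zero of `B̄_N + B_N = H + b₁ x`, we have
`H ρ = -b₁ ρ`, and the intermediate value theorem forces `H u ≥ -b₁ u` for `u < ρ`. Thus the
constants `u` and `ρ` are a sub- and a supersolution of `y' = b₁ y + H y`, and the
variation-of-constants step `y ↦ e^{b₁ t}(u + ∫₀ᵗ e^{-b₁ s} H(y s) ds)` is monotone and maps
functions with values in `[u, ρ)` to such functions; induction on `n` concludes.
-/

open Set Real MeasureTheory

section PowerSeries

variable {c : ℕ → ℝ}

lemma summable_mul_pow_of_abs_le_one (hc : Summable fun j => |c j|) {x : ℝ} (hx : |x| ≤ 1) :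
    Summable fun j => c j * x ^ j :=
  hc.of_norm_bounded fun j => by
    rw [Real.norm_eq_abs, abs_mul, abs_pow]
    exact mul_le_of_le_one_right (abs_nonneg _) (pow_le_one₀ (abs_nonneg x) hx)

lemma continuousOn_tsum_mul_pow (hc : Summable fun j => |c j|) :
    ContinuousOn (fun x => ∑' j, c j * x ^ j) (Icc (-1) 1) := by
  refine continuousOn_tsum (fun j => (continuous_const.mul (continuous_pow j)).continuousOn) hc
    fun j x hx => ?_
  rw [Real.norm_eq_abs, abs_mul, abs_pow]
  exact mul_le_of_le_one_right (abs_nonneg _) (pow_le_one₀ (abs_nonneg x) (abs_le.2 hx))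

lemma monotoneOn_tsum_mul_pow (hc0 : ∀ j, 0 ≤ c j) (hc : Summable c) :
    MonotoneOn (fun x => ∑' j, c j * x ^ j) (Icc 0 1) := by
  intro x hx x' hx' hxx'
  have habs : Summable fun j => |c j| := hc.abs
  refine Summable.tsum_le_tsum (fun j => ?_)
    (summable_mul_pow_of_abs_le_one habs (abs_le.2 ⟨by linarith [hx.1], hx.2⟩))
    (summable_mul_pow_of_abs_le_one habs (abs_le.2 ⟨by linarith [hx'.1], hx'.2⟩))
  exact mul_le_mul_of_nonneg_left (pow_le_pow_left₀ hx.1 hxx' j) (hc0 j)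

end PowerSeries

lemma summable_abs_of_summable_ite_eq {f : ℕ → ℝ} (i : ℕ)
    (hf : Summable fun j => if j = i then 0 else f j) : Summable fun j => |f j| := by
  refine (hf.add (hasSum_ite_eq i (f i)).summable).abs.congr fun j => ?_
  by_cases hi : j = i <;> simp [hi]

lemma nonneg_of_lt_isLeast_zero {G : ℝ → ℝ} {ρ u : ℝ} (hG : ContinuousOn G (Icc 0 1))
    (hG0 : 0 ≤ G 0) (hρ : IsLeast {w | w ∈ Icc 0 1 ∧ G w = 0} ρ) (hu : u ∈ Ico 0 ρ) :
    0 ≤ G u := by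
  have hu1 : u ≤ 1 := hu.2.le.trans hρ.1.1.2
  by_contra! hGu
  obtain ⟨w, hw, hGw⟩ := intermediate_value_Icc' hu.1 (hG.mono (Icc_subset_Icc_right hu1))
    ⟨hGu.le, hG0⟩
  exact (hρ.2 ⟨⟨hw.1, hw.2.trans hu1⟩, hGw⟩).not_gt (hw.2.trans_lt hu.2)

section Picard

/-- Variation of constants: the solution of `z' = a z + f`, `z 0 = u`. -/
noncomputable def picardStep (a u : ℝ) (f : ℝ → ℝ) (t : ℝ) : ℝ :=
  exp (a * t) * (u + ∫ s in (0 : ℝ)..t, exp (-(a * s)) * f s)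

variable {a u : ℝ} {f g : ℝ → ℝ}

lemma integral_exp_neg_mul_mul_const (a r t : ℝ) :
    ∫ s in (0 : ℝ)..t, exp (-(a * s)) * (-a * r) = r * (exp (-(a * t)) - 1) := by
  have hderiv (s : ℝ) :
      HasDerivAt (fun s => r * exp (-(a * s))) (exp (-(a * s)) * (-a * r)) s :=
    ((((hasDerivAt_id' s).const_mul a).fun_neg.exp).const_mul r).congr_deriv (by ring)
  rw [intervalIntegral.integral_eq_sub_of_hasDerivAt (fun s _ => hderiv s)
    (Continuous.intervalIntegrable (by fun_prop) 0 t)]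
  simp only [mul_zero, neg_zero, exp_zero, mul_one]
  ring

lemma intervalIntegrable_exp_mul {t : ℝ} (ht : 0 ≤ t) (hf : ContinuousOn f (Icc 0 t)) :
    IntervalIntegrable (fun s => exp (-(a * s)) * f s) volume 0 t :=
  ((by fun_prop : Continuous fun s => exp (-(a * s))).continuousOn.mul hf).intervalIntegrable_of_Icc
    ht

lemma continuousOn_picardStep {T : ℝ} (hT : 0 ≤ T) (hf : ContinuousOn f (Icc 0 T)) :
    ContinuousOn (picardStep a u f) (Icc 0 T) := by
  have hprim := intervalIntegral.continuousOn_primitive_interval'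
    (intervalIntegrable_exp_mul (a := a) hT hf) left_mem_uIcc
  rw [uIcc_of_le hT] at hprim
  exact (by fun_prop : Continuous fun t => exp (a * t)).continuousOn.mul
    (continuousOn_const.add hprim)

lemma picardStep_le_picardStep {t : ℝ} (ht : 0 ≤ t) (hf : ContinuousOn f (Icc 0 t))
    (hg : ContinuousOn g (Icc 0 t)) (hfg : ∀ s ∈ Icc 0 t, f s ≤ g s) :
    picardStep a u f t ≤ picardStep a u g t := by
  refine mul_le_mul_of_nonneg_left (add_le_add_right ?_ u) (exp_pos _).le
  exact intervalIntegral.integral_mono_on ht (intervalIntegrable_exp_mul ht hf)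
    (intervalIntegrable_exp_mul ht hg)
    fun s hs => mul_le_mul_of_nonneg_left (hfg s hs) (exp_pos _).le

lemma picardStep_mem_Ico {ρ t : ℝ} (ht : 0 ≤ t) (huρ : u < ρ) (hf : ContinuousOn f (Icc 0 t))
    (hfu : ∀ s ∈ Icc 0 t, -a * u ≤ f s) (hfρ : ∀ s ∈ Icc 0 t, f s ≤ -a * ρ) :
    picardStep a u f t ∈ Ico u ρ := by
  have hlow := picardStep_le_picardStep (a := a) (u := u) ht continuousOn_const hf hfu
  have hupp := picardStep_le_picardStep (a := a) (u := u) ht hf continuousOn_const hfρ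
  have hee : exp (a * t) * exp (-(a * t)) = 1 := by rw [← exp_add, add_neg_cancel, exp_zero]
  have hlow_eq : picardStep a u (fun _ => -a * u) t = u := by
    rw [picardStep, integral_exp_neg_mul_mul_const]
    linear_combination u * hee
  have hupp_eq : picardStep a u (fun _ => -a * ρ) t = ρ + exp (a * t) * (u - ρ) := by
    rw [picardStep, integral_exp_neg_mul_mul_const]
    linear_combination ρ * hee
  have hneg : exp (a * t) * (u - ρ) < 0 := mul_neg_of_pos_of_neg (exp_pos _) (by linarith)
  exact ⟨by linarith, by linarith⟩

theorem picard_iterates_continuousOn_and_mem_Ico {a u ρ : ℝ} {F : ℝ → ℝ} {y : ℕ → ℝ → ℝ}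
    (huρ : u < ρ) (hFc : ContinuousOn F (Icc u ρ)) (hFm : MonotoneOn F (Icc u ρ))
    (hFu : -a * u ≤ F u) (hFρ : F ρ ≤ -a * ρ) (hy0 : ∀ t, y 0 t = u)
    (hyrec : ∀ n t, y (n + 1) t = picardStep a u (fun s => F (y n s)) t) (n : ℕ) :
    (∀ T, 0 ≤ T → ContinuousOn (y n) (Icc 0 T)) ∧ ∀ t, 0 ≤ t → y n t ∈ Ico u ρ := by
  induction n with
  | zero =>
    exact ⟨fun T _ => continuousOn_const.congr fun t _ => hy0 t,
      fun t _ => by rw [hy0]; exact ⟨le_rfl, huρ⟩⟩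
  | succ n ih =>
    obtain ⟨hcont, hmem⟩ := ih
    have hFy (T : ℝ) (hT : 0 ≤ T) : ContinuousOn (fun s => F (y n s)) (Icc 0 T) :=
      hFc.comp (hcont T hT) fun s hs => Ico_subset_Icc_self (hmem s hs.1)
    refine ⟨fun T hT => (continuousOn_picardStep hT (hFy T hT)).congr fun t _ => hyrec n t,
      fun t ht => hyrec n t ▸ picardStep_mem_Ico ht huρ (hFy t ht) (fun s hs => ?_) fun s hs => ?_⟩
    · exact hFu.trans (hFm ⟨le_rfl, huρ.le⟩ (Ico_subset_Icc_self (hmem s hs.1)) (hmem s hs.1).1)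
    · exact (hFm (Ico_subset_Icc_self (hmem s hs.1)) ⟨huρ.le, le_rfl⟩ (hmem s hs.1).2.le).trans hFρ

theorem picard_iterates_mem_Ico_and_le_succ {a u ρ : ℝ} {F : ℝ → ℝ} {y : ℕ → ℝ → ℝ}
    (huρ : u < ρ) (hFc : ContinuousOn F (Icc u ρ)) (hFm : MonotoneOn F (Icc u ρ))
    (hFu : -a * u ≤ F u) (hFρ : F ρ ≤ -a * ρ) (hy0 : ∀ t, y 0 t = u)
    (hyrec : ∀ n t, y (n + 1) t = picardStep a u (fun s => F (y n s)) t) (n : ℕ) (t : ℝ)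
    (ht : 0 ≤ t) : y n t ∈ Ico u ρ ∧ y n t ≤ y (n + 1) t := by
  have hinv := picard_iterates_continuousOn_and_mem_Ico huρ hFc hFm hFu hFρ hy0 hyrec
  refine ⟨(hinv n).2 t ht, ?_⟩
  induction n generalizing t with
  | zero => exact hy0 t ▸ ((hinv 1).2 t ht).1
  | succ n ih =>
    rw [hyrec n t, hyrec (n + 1) t]
    have hFy (m : ℕ) : ContinuousOn (fun s => F (y m s)) (Icc 0 t) :=
      hFc.comp ((hinv m).1 t ht) fun s hs => Ico_subset_Icc_self ((hinv m).2 s hs.1)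
    exact picardStep_le_picardStep ht (hFy n) (hFy (n + 1)) fun s hs =>
      hFm (Ico_subset_Icc_self ((hinv n).2 s hs.1))
        (Ico_subset_Icc_self ((hinv (n + 1)).2 s hs.1)) (ih s hs.1)

end Picard

/-- Coefficients of `H(x) = B_N(x,v) + B̄_N(x) - b₁ x` as a power series in `x`. -/
def hCoeff (b : ℕ → ℝ) (N : Finset ℕ) (v : ℕ → ℝ) (j : ℕ) : ℝ :=
  if j ∈ N then b j * v j else if j = 1 then 0 else b j

section HCoeff

variable {b v : ℕ → ℝ} {N : Finset ℕ}

lemma hCoeff_nonneg (hb : ∀ j, j ≠ 1 → 0 ≤ b j) (h1N : 1 ∉ N)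
    (hv : ∀ j ∈ N, v j ∈ Ico (0 : ℝ) 1) (j : ℕ) : 0 ≤ hCoeff b N v j := by
  unfold hCoeff
  split_ifs with hj h1
  · exact mul_nonneg (hb j (ne_of_mem_of_not_mem hj h1N)) (hv j hj).1
  · exact le_rfl
  · exact hb j h1

lemma hCoeff_le (hb : ∀ j, j ≠ 1 → 0 ≤ b j) (h1N : 1 ∉ N)
    (hv : ∀ j ∈ N, v j ∈ Ico (0 : ℝ) 1) (j : ℕ) : hCoeff b N v j ≤ if j = 1 then 0 else b j := by
  unfold hCoeff
  split_ifs with hj h1 h1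
  · exact absurd (h1 ▸ hj) h1N
  · exact mul_le_of_le_one_right (hb j h1) (hv j hj).2.le
  · exact le_rfl
  · exact le_rfl

lemma hasSum_hCoeff_mul_pow (h1N : 1 ∉ N) {x : ℝ}
    (hx : Summable fun j => if j ∈ N then 0 else b j * x ^ j) :
    HasSum (fun j => hCoeff b N v j * x ^ j)
      ((∑ j ∈ N, b j * v j * x ^ j) + (∑' j, if j ∈ N then 0 else b j * x ^ j) - b 1 * x) := by
  have hfin : HasSum (fun j => if j ∈ N then b j * v j * x ^ j else 0)
      (∑ j ∈ N, b j * v j * x ^ j) := by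
    have h := hasSum_sum_of_ne_finset_zero (L := SummationFilter.unconditional ℕ) (s := N)
      (f := fun j => if j ∈ N then b j * v j * x ^ j else 0) fun j hj => if_neg hj
    rwa [Finset.sum_congr rfl fun j hj => if_pos hj] at h
  refine ((hfin.add hx.hasSum).sub (hasSum_ite_eq 1 (b 1 * x))).congr_fun fun j => ?_
  unfold hCoeff
  by_cases hj : j ∈ N
  · have : j ≠ 1 := ne_of_mem_of_not_mem hj h1N
    simp [hj, this]
  · by_cases h1 : j = 1
    · subst h1
      simp [hj]
    · simp [hj, h1]

lemma eqOn_tsum_hCoeff_mul_pow (h1N : 1 ∉ N) (hb : Summable fun j => |b j|) :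
    EqOn (fun x => ∑' j, hCoeff b N v j * x ^ j)
      (fun x => (∑ j ∈ N, b j * v j * x ^ j) + (∑' j, if j ∈ N then 0 else b j * x ^ j) - b 1 * x)
      (Icc (-1) 1) := fun x hx => by
  refine (hasSum_hCoeff_mul_pow h1N ?_).tsum_eq
  refine (summable_mul_pow_of_abs_le_one hb (abs_le.2 hx)).norm.of_norm_bounded fun j => ?_
  split_ifs
  · exact norm_zero.trans_le (norm_nonneg _)
  · exact le_rfl

end HCoeff

theorem stmt_9_general
    (b : ℕ → ℝ)
    (hb_nonneg : ∀ j : ℕ, j ≠ 1 → 0 ≤ b j)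
    (hb_sum : HasSum (fun j : ℕ => if j = 1 then 0 else b j) (-(b 1)))
    (N : Finset ℕ) (h1N : (1 : ℕ) ∉ N)
    (v : ℕ → ℝ) (hv : ∀ j ∈ N, v j ∈ Set.Ico (0 : ℝ) 1)
    (ρv : ℝ)
    (hρv : IsLeast {w : ℝ | w ∈ Set.Icc (0 : ℝ) 1 ∧
        (∑' j : ℕ, if j ∈ N then 0 else b j * w ^ j)
          + (∑ j ∈ N, b j * v j * w ^ j) = 0} ρv)
    (u : ℝ) (hu : u ∈ Set.Ico 0 ρv)
    (H : ℝ → ℝ)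
    (hH : ∀ x : ℝ, H x = (∑ j ∈ N, b j * v j * x ^ j)
        + (∑' j : ℕ, if j ∈ N then 0 else b j * x ^ j) - b 1 * x)
    (y : ℕ → ℝ → ℝ)
    (hy0 : ∀ t : ℝ, y 0 t = u)
    (hyrec : ∀ (n : ℕ) (t : ℝ), y (n + 1) t =
      Real.exp (b 1 * t) * (u + ∫ s in (0 : ℝ)..t, Real.exp (-(b 1 * s)) * H (y n s))) :
    ∀ (n : ℕ) (t : ℝ), 0 ≤ t →
      u ≤ y n t ∧ y n t < ρv ∧ y n t ≤ y (n + 1) t := by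
  obtain ⟨⟨-, hρ1⟩, hρ⟩ := hρv.1
  have hb : Summable fun j => |b j| := summable_abs_of_summable_ite_eq 1 hb_sum.summable
  have hcoeff : Summable (hCoeff b N v) :=
    .of_nonneg_of_le (hCoeff_nonneg hb_nonneg h1N hv) (hCoeff_le hb_nonneg h1N hv) hb_sum.summable
  have hHx : EqOn (fun x => ∑' j, hCoeff b N v j * x ^ j) H (Icc (-1) 1) := fun x hx =>
    (eqOn_tsum_hCoeff_mul_pow h1N hb hx).trans (hH x).symm
  have hHc : ContinuousOn H (Icc (-1) 1) := (continuousOn_tsum_mul_pow hcoeff.abs).congr hHx.symm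
  have hHm : MonotoneOn H (Icc 0 1) :=
    (monotoneOn_tsum_mul_pow (hCoeff_nonneg hb_nonneg h1N hv) hcoeff).congr
      (hHx.mono (Icc_subset_Icc_left (by norm_num)))
  have hGH (x : ℝ) : (∑' j : ℕ, if j ∈ N then 0 else b j * x ^ j)
      + (∑ j ∈ N, b j * v j * x ^ j) = H x + b 1 * x := by rw [hH]; ring
  have hHu : 0 ≤ H u + b 1 * u := by
    refine hGH u ▸ nonneg_of_lt_isLeast_zero
      (G := fun w => (∑' j : ℕ, if j ∈ N then 0 else b j * w ^ j) + ∑ j ∈ N, b j * v j * w ^ j)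
      ?_ ?_ hρv hu
    · exact ((hHc.mono (Icc_subset_Icc_left (by norm_num))).add
        (continuous_const.mul continuous_id).continuousOn).congr fun x _ => hGH x
    · rw [hGH 0, mul_zero, add_zero, ← hHx ⟨by norm_num, by norm_num⟩]
      exact tsum_nonneg fun j =>
        mul_nonneg (hCoeff_nonneg hb_nonneg h1N hv j) (pow_nonneg le_rfl j)
  intro n t ht
  obtain ⟨⟨hun, hnρ⟩, hmono⟩ := picard_iterates_mem_Ico_and_le_succ (a := b 1) hu.2
    (hHc.mono (Icc_subset_Icc (by linarith [hu.1]) hρ1)) (hHm.mono (Icc_subset_Icc hu.1 hρ1))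
    (by linarith) (by linarith [hGH ρv]) hy0 hyrec n t ht
  exact ⟨hun, hnρ, hmono⟩

/-- Let `v ∈ [0,1)^N` and `u ∈ [0,ρ(v))`. With
`H(x) = B_N(x,v) + B̄_N(x) − b₁x`, `y₀(t) = u` and
`y_{n+1}(t) = e^{b₁t}(u + ∫₀ᵗ e^{−b₁s} H(y_n(s)) ds)`, one has, for all `n ≥ 0` and
`t ≥ 0`: `u ≤ y_n(t) < ρ(v)` and `y_{n+1}(t) ≥ y_n(t)`. -/
theorem stmt_9
    (b : ℕ → ℝ)
    (hb_nonneg : ∀ j : ℕ, j ≠ 1 → 0 ≤ b j)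
    (hb1 : b 1 < 0)
    (hb_sum : HasSum (fun j : ℕ => if j = 1 then 0 else b j) (-(b 1)))
    (N : Finset ℕ) (hN : N.Nonempty) (h1N : (1 : ℕ) ∉ N)
    (hbN : ∀ k ∈ N, 0 < b k)
    (v : ℕ → ℝ) (hv : ∀ j ∈ N, v j ∈ Set.Ico (0 : ℝ) 1)
    (ρv : ℝ)
    (hρv : IsLeast {w : ℝ | w ∈ Set.Icc (0 : ℝ) 1 ∧
        (∑' j : ℕ, if j ∈ N then 0 else b j * w ^ j)
          + (∑ j ∈ N, b j * v j * w ^ j) = 0} ρv)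
    (u : ℝ) (hu : u ∈ Set.Ico 0 ρv)
    (H : ℝ → ℝ)
    (hH : ∀ x : ℝ, H x = (∑ j ∈ N, b j * v j * x ^ j)
        + (∑' j : ℕ, if j ∈ N then 0 else b j * x ^ j) - b 1 * x)
    (y : ℕ → ℝ → ℝ)
    (hy0 : ∀ t : ℝ, y 0 t = u)
    (hyrec : ∀ (n : ℕ) (t : ℝ), y (n + 1) t =
      Real.exp (b 1 * t) * (u + ∫ s in (0 : ℝ)..t, Real.exp (-(b 1 * s)) * H (y n s))) :
    ∀ (n : ℕ) (t : ℝ), 0 ≤ t →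
      u ≤ y n t ∧ y n t < ρv ∧ y n t ≤ y (n + 1) t :=
  stmt_9_general b hb_nonneg hb_sum N h1N v hv ρv hρv u hu H hH y hy0 hyrec
end

section
/- Let v ∈ [0,1) and u ∈ [0,1] with u ≠ β(v). Then for every t ≥ 0 the denominator 1 − ((α(v) − u)/(β(v) − u))·e^{(α(v) − β(v))·b·q·t} is nonzero, and the function y(t) = β(v) + (α(v) − β(v)) / (1 − ((α(v) − u)/(β(v) − u))·e^{(α(v) − β(v))·b·q·t}) satisfies y(0) = u and y'(t) = b·(p·v − y(t) + q·y(t)²) for all t ≥ 0. -/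
/-!
The quadratic `p v - y + q y²` factors as `q (y - α)(y - β)`, so the equation is the Riccati
equation `y' = b q (y - α)(y - β)`, whose solutions are the logistic-type curves
`β + (α - β) / (1 - c e^{(α - β) k t})`. Since `1 - 4pq = (1 - 2q)²`, the discriminant satisfies
`√(1 - 4pqv) > |1 - 2q|` for `v < 1`, which gives `β < 1 < α`. Hence `u < α`, and the constant
`c = (α - u)/(β - u)` is either negative or larger than `1`; in both cases the denominator cannot
vanish for `t ≥ 0`.
-/

open Real

noncomputable def riccatiCurve (α β c r t : ℝ) : ℝ :=
  β + (α - β) / (1 - c * exp (r * t))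

theorem riccatiCurve_zero {α β u : ℝ} (hαβ : α ≠ β) (huβ : u ≠ β) (r : ℝ) :
    riccatiCurve α β ((α - u) / (β - u)) r 0 = u := by
  have hβu : β - u ≠ 0 := sub_ne_zero.2 huβ.symm
  have hβα : β - α ≠ 0 := sub_ne_zero.2 hαβ.symm
  rw [riccatiCurve, mul_zero, exp_zero, mul_one, one_sub_div hβu,
    show β - u - (α - u) = β - α by ring]
  field_simp
  ring

theorem hasDerivAt_riccatiCurve {α β c k r t : ℝ} (hr : r = (α - β) * k)
    (hD : 1 - c * exp (r * t) ≠ 0) :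
    HasDerivAt (riccatiCurve α β c r)
      (k * ((riccatiCurve α β c r t - α) * (riccatiCurve α β c r t - β))) t := by
  have hE : HasDerivAt (fun t => exp (r * t)) (exp (r * t) * r) t := by
    simpa using ((hasDerivAt_id t).const_mul r).exp
  subst hr
  refine (((hasDerivAt_const t (α - β)).div ((hE.const_mul c).const_sub 1) hD).const_add β)
    |>.congr_deriv ?_
  simp only [riccatiCurve]
  generalize hD' : 1 - c * exp ((α - β) * k * t) = D at hD ⊢
  field_simp
  linear_combination (-(α - β) ^ 2 * k) * hD'

theorem one_sub_div_mul_exp_ne_zero {α β u x : ℝ} (huβ : u ≠ β) (hβα : β < α) (huα : u < α)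
    (hx : 0 ≤ x) : 1 - (α - u) / (β - u) * exp x ≠ 0 := by
  rcases huβ.lt_or_gt with huβ | hβu
  · have hc : 1 < (α - u) / (β - u) := (one_lt_div (sub_pos.2 huβ)).2 (by linarith)
    nlinarith [one_le_exp hx]
  · have hc : (α - u) / (β - u) < 0 := div_neg_of_pos_of_neg (by linarith) (by linarith)
    nlinarith [exp_pos x]

theorem sub_add_mul_sq_eq_mul_sub_mul_sub {a q s : ℝ} (hq : q ≠ 0) (hs : s ^ 2 = 1 - 4 * a * q)
    (Y : ℝ) :
    a - Y + q * Y ^ 2 = q * ((Y - (1 + s) / (2 * q)) * (Y - (1 - s) / (2 * q))) := by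
  field_simp
  linear_combination hs

theorem abs_one_sub_two_mul_lt_sqrt {p q v : ℝ} (hp : 0 < p) (hq : 0 < q) (hpq : p + q = 1)
    (hv : v < 1) : |1 - 2 * q| < √(1 - 4 * p * q * v) := by
  refine lt_sqrt_of_sq_lt ?_
  rw [sq_abs, show (1 - 2 * q) ^ 2 = 1 - 4 * p * q by linear_combination (4 * q) * hpq]
  nlinarith [mul_pos (mul_pos hp hq) (sub_pos.2 hv)]

/-- Let `v ∈ [0,1)`, `u ∈ [0,1]` with `u ≠ β(v)`. Then for every `t ≥ 0` the
denominator `1 − ((α(v)−u)/(β(v)−u))·e^{(α(v)−β(v))bqt}` is nonzero, and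
`y(t) = β(v) + (α(v)−β(v)) / (1 − ((α(v)−u)/(β(v)−u))·e^{(α(v)−β(v))bqt})` satisfies
`y(0) = u` and `y'(t) = b(pv − y(t) + qy(t)²)` for all `t ≥ 0`. -/
theorem stmt_10
    (b p q : ℝ) (hb : 0 < b) (hp : p ∈ Set.Ioo (0 : ℝ) 1) (hq : q = 1 - p)
    (v : ℝ) (hv : v ∈ Set.Ico (0 : ℝ) 1)
    (u : ℝ) (hu : u ∈ Set.Icc (0 : ℝ) 1)
    (α β : ℝ)
    (hα : α = (1 + Real.sqrt (1 - 4 * p * q * v)) / (2 * q))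
    (hβ : β = (1 - Real.sqrt (1 - 4 * p * q * v)) / (2 * q))
    (huβ : u ≠ β)
    (y : ℝ → ℝ)
    (hy : ∀ t : ℝ, y t = β + (α - β) /
      (1 - ((α - u) / (β - u)) * Real.exp ((α - β) * b * q * t))) :
    (∀ t : ℝ, 0 ≤ t →
      1 - ((α - u) / (β - u)) * Real.exp ((α - β) * b * q * t) ≠ 0) ∧
    y 0 = u ∧
    (∀ t : ℝ, 0 ≤ t → HasDerivAt y (b * (p * v - y t + q * (y t) ^ 2)) t) := by
  have hq0 : 0 < q := by linarith [hp.2]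
  have hs := abs_one_sub_two_mul_lt_sqrt hp.1 hq0 (by linarith) hv.2
  have hα1 : 1 < α := by
    rw [hα, one_lt_div (by positivity)]; linarith [neg_abs_le (1 - 2 * q)]
  have hβ1 : β < 1 := by
    rw [hβ, div_lt_one (by positivity)]; linarith [le_abs_self (1 - 2 * q)]
  have hden (t : ℝ) (ht : 0 ≤ t) :
      1 - ((α - u) / (β - u)) * exp ((α - β) * b * q * t) ≠ 0 :=
    one_sub_div_mul_exp_ne_zero huβ (by linarith) (by linarith [hu.2])
      (mul_nonneg (mul_nonneg (mul_nonneg (by linarith) hb.le) hq0.le) ht)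
  have hy' : y = riccatiCurve α β ((α - u) / (β - u)) ((α - β) * b * q) := funext hy
  refine ⟨hden, hy' ▸ riccatiCurve_zero (by linarith) huβ _, fun t ht => ?_⟩
  have hfactor : p * v - y t + q * y t ^ 2 = q * ((y t - α) * (y t - β)) := by
    rw [hα, hβ]
    refine sub_add_mul_sq_eq_mul_sub_mul_sub hq0.ne' ?_ _
    rw [sq_sqrt (sqrt_pos.1 ((abs_nonneg _).trans_lt hs)).le]; ring
  rw [hfactor, ← mul_assoc, hy']
  exact hasDerivAt_riccatiCurve (by ring) (hden t ht)
end

section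
/- Define the sequence (g_n)_{n≥0} by g_0 = 0, g_1 = p, and for n ≥ 2, g_n = q · Σ_{i+j+k=n, i,j,k<n} g_i·g_j·g_k (sum over ordered triples of natural numbers). Then g_n ≥ 0 for every n; for every v ∈ [0,1] the series β(v) = Σ_{n=0}^∞ g_n·v^n converges with 0 ≤ β(v) ≤ 1, it satisfies p·v − β(v) + q·β(v)³ = 0, and β(v) is the least element of {y ∈ ℝ : y ≥ 0 and p·v − y + q·y³ = 0}. -/
open Finset

private lemma cube_eq' (a : ℕ → ℝ) (N : ℕ) :
    (∑ n ∈ range N, a n) ^ 3 =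
      ∑ x ∈ range N ×ˢ range N ×ˢ range N, a x.1 * a x.2.1 * a x.2.2 := by
  rw [Finset.sum_product]
  simp only [Finset.sum_product]
  rw [pow_succ, pow_two, Finset.sum_mul_sum, Finset.sum_mul]
  refine Finset.sum_congr rfl fun i _ => ?_
  rw [Finset.sum_mul]
  refine Finset.sum_congr rfl fun j _ => ?_
  rw [Finset.mul_sum]

private lemma key_id' (p q : ℝ) (g : ℕ → ℝ) (v : ℝ)
    (hg0 : g 0 = 0) (hg1 : g 1 = p)
    (hgrec : ∀ n : ℕ, 2 ≤ n → g n =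
      q * ∑ x ∈ (Finset.range n ×ˢ Finset.range n ×ˢ Finset.range n).filter
          (fun x : ℕ × ℕ × ℕ => x.1 + x.2.1 + x.2.2 = n),
        g x.1 * g x.2.1 * g x.2.2)
    (N : ℕ) (hN : 1 ≤ N) :
    ∑ n ∈ range (N + 1), g n * v ^ n
      = p * v + q * ∑ x ∈ (Finset.Ico 2 (N + 1)).biUnion (fun n =>
          (range n ×ˢ range n ×ˢ range n).filter
            (fun x : ℕ × ℕ × ℕ => x.1 + x.2.1 + x.2.2 = n)),
          (g x.1 * v ^ x.1) * (g x.2.1 * v ^ x.2.1) * (g x.2.2 * v ^ x.2.2) := by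
  have hdisj : (↑(Finset.Ico 2 (N + 1)) : Set ℕ).PairwiseDisjoint (fun n =>
      (range n ×ˢ range n ×ˢ range n).filter
        (fun x : ℕ × ℕ × ℕ => x.1 + x.2.1 + x.2.2 = n)) := by
    intro i _ j _ hij
    simp only [Function.onFun]
    rw [Finset.disjoint_left]
    intro x hxi hxj
    simp only [mem_filter] at hxi hxj
    omega
  rw [Finset.sum_biUnion hdisj]
  rw [Finset.range_eq_Ico, Finset.sum_eq_sum_Ico_succ_bot (by omega),
    Finset.sum_eq_sum_Ico_succ_bot (by omega : 1 < N + 1)]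
  have hterm : ∀ n ∈ Finset.Ico 2 (N + 1), g n * v ^ n =
      q * ∑ x ∈ (range n ×ˢ range n ×ˢ range n).filter
          (fun x : ℕ × ℕ × ℕ => x.1 + x.2.1 + x.2.2 = n),
        (g x.1 * v ^ x.1) * (g x.2.1 * v ^ x.2.1) * (g x.2.2 * v ^ x.2.2) := by
    intro n hn
    rw [Finset.mem_Ico] at hn
    rw [hgrec n hn.1, mul_assoc, Finset.sum_mul, Finset.mul_sum, Finset.mul_sum]
    refine Finset.sum_congr rfl fun x hx => ?_
    simp only [mem_filter] at hx
    rw [← hx.2, pow_add, pow_add]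
    ring
  rw [Finset.sum_congr rfl hterm, ← Finset.mul_sum]
  simp [hg0, hg1]

/-- With `g₀ = 0`, `g₁ = p` and, for `n ≥ 2`,
`g_n = q · Σ_{i+j+k=n, i,j,k<n} g_i g_j g_k` (ordered triples), one has `g_n ≥ 0` for all
`n`; for every `v ∈ [0,1]` the series `β(v) = Σ g_n vⁿ` converges with `0 ≤ β(v) ≤ 1`,
`pv − β(v) + qβ(v)³ = 0`, and `β(v)` is the least element of
`{y : y ≥ 0 ∧ pv − y + qy³ = 0}`. -/
theorem stmt_16
    (p q : ℝ) (hp : p ∈ Set.Ioo (0 : ℝ) 1) (hq : q = 1 - p)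
    (g : ℕ → ℝ)
    (hg0 : g 0 = 0) (hg1 : g 1 = p)
    (hgrec : ∀ n : ℕ, 2 ≤ n → g n =
      q * ∑ x ∈ (Finset.range n ×ˢ Finset.range n ×ˢ Finset.range n).filter
          (fun x : ℕ × ℕ × ℕ => x.1 + x.2.1 + x.2.2 = n),
        g x.1 * g x.2.1 * g x.2.2) :
    (∀ n : ℕ, 0 ≤ g n) ∧
    ∀ v : ℝ, v ∈ Set.Icc (0 : ℝ) 1 →
      ∃ βv : ℝ,
        HasSum (fun n : ℕ => g n * v ^ n) βv ∧
        βv ∈ Set.Icc (0 : ℝ) 1 ∧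
        p * v - βv + q * βv ^ 3 = 0 ∧
        IsLeast {y : ℝ | 0 ≤ y ∧ p * v - y + q * y ^ 3 = 0} βv := by
  obtain ⟨hp0, hp1⟩ := hp
  have hq0 : 0 ≤ q := by rw [hq]; linarith
  have hgnn : ∀ n : ℕ, 0 ≤ g n := by
    intro n
    induction n using Nat.strong_induction_on with
    | _ n ih =>
      match n with
      | 0 => simp [hg0]
      | 1 => rw [hg1]; exact hp0.le
      | (m + 2) =>
        rw [hgrec (m + 2) (by omega)]
        refine mul_nonneg hq0 (Finset.sum_nonneg fun x hx => ?_)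
        simp only [mem_filter, mem_product, mem_range] at hx
        exact mul_nonneg (mul_nonneg (ih _ hx.1.1) (ih _ hx.1.2.1)) (ih _ hx.1.2.2)
  refine ⟨hgnn, ?_⟩
  rintro v ⟨hv0, hv1⟩
  set a : ℕ → ℝ := fun n => g n * v ^ n with ha_def
  have ha : ∀ n, 0 ≤ a n := fun n => mul_nonneg (hgnn n) (pow_nonneg hv0 n)
  set S : ℕ → ℝ := fun N => ∑ n ∈ range N, a n with hS_def
  have hSnn : ∀ N, 0 ≤ S N := fun N => Finset.sum_nonneg fun n _ => ha n
  set h : ℕ × ℕ × ℕ → ℝ := fun x => a x.1 * a x.2.1 * a x.2.2 with hh_def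
  have hhnn : ∀ x, 0 ≤ h x := fun x => mul_nonneg (mul_nonneg (ha _) (ha _)) (ha _)
  set F : ℕ → Finset (ℕ × ℕ × ℕ) := fun n =>
    (range n ×ˢ range n ×ˢ range n).filter
      (fun x : ℕ × ℕ × ℕ => x.1 + x.2.1 + x.2.2 = n) with hF_def
  have hkey : ∀ N : ℕ, 1 ≤ N →
      S (N + 1) = p * v + q * ∑ x ∈ (Finset.Ico 2 (N + 1)).biUnion F, h x :=
    fun N hN => key_id' p q g v hg0 hg1 hgrec N hN
  have hcube : ∀ N, (S N) ^ 3 = ∑ x ∈ range N ×ˢ range N ×ˢ range N, h x :=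
    fun N => cube_eq' a N
  -- upper step inequality
  have hstep : ∀ N : ℕ, S (N + 1) ≤ p * v + q * (S N) ^ 3 := by
    intro N
    rcases Nat.eq_zero_or_pos N with h0 | h1
    · subst h0
      have : S 1 = 0 := by simp [hS_def, ha_def, hg0]
      rw [this]
      have : (0:ℝ) ≤ p * v := mul_nonneg hp0.le hv0
      nlinarith [hSnn 0, hq0, pow_nonneg (hSnn 0) 3]
    · rw [hkey N h1, hcube N]
      have hsub : (Finset.Ico 2 (N + 1)).biUnion F ⊆ range N ×ˢ range N ×ˢ range N := by
        intro x hx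
        rw [Finset.mem_biUnion] at hx
        obtain ⟨n, hn, hxn⟩ := hx
        rw [Finset.mem_Ico] at hn
        simp only [hF_def, mem_filter, mem_product, mem_range] at hxn ⊢
        omega
      have := Finset.sum_le_sum_of_subset_of_nonneg hsub (fun x _ _ => hhnn x)
      nlinarith [hq0]
  -- lower step inequality
  have hstep2 : ∀ M : ℕ, p * v + q * (S M) ^ 3 ≤ S (3 * M + 2) := by
    intro M
    have h31 : (1:ℕ) ≤ 3 * M + 1 := by omega
    have hkey' := hkey (3 * M + 1) h31
    have heq : (S M) ^ 3 = ∑ x ∈ (range M ×ˢ range M ×ˢ range M).filter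
        (fun x => x ∈ (Finset.Ico 2 (3 * M + 2)).biUnion F), h x := by
      rw [hcube M]
      refine (Finset.sum_filter_of_ne ?_).symm
      intro x hx hne
      simp only [mem_product, mem_range] at hx
      have hx1 : x.1 ≠ 0 := by
        intro h0
        apply hne
        simp [hh_def, ha_def, h0, hg0]
      have hx2 : x.2.1 ≠ 0 := by
        intro h0
        apply hne
        simp [hh_def, ha_def, h0, hg0]
      have hx3 : x.2.2 ≠ 0 := by
        intro h0
        apply hne
        simp [hh_def, ha_def, h0, hg0]
      rw [Finset.mem_biUnion]
      refine ⟨x.1 + x.2.1 + x.2.2, ?_, ?_⟩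
      · rw [Finset.mem_Ico]; omega
      · simp only [hF_def, mem_filter, mem_product, mem_range]
        exact ⟨by omega, trivial⟩
    have hsub2 : (range M ×ˢ range M ×ˢ range M).filter
        (fun x => x ∈ (Finset.Ico 2 (3 * M + 2)).biUnion F)
        ⊆ (Finset.Ico 2 (3 * M + 2)).biUnion F := by
      intro x hx
      exact (Finset.mem_filter.mp hx).2
    have hle := Finset.sum_le_sum_of_subset_of_nonneg hsub2 (fun x _ _ => hhnn x)
    have : 3 * M + 1 + 1 = 3 * M + 2 := by omega
    rw [this] at hkey'
    rw [hkey', heq]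
    nlinarith [hq0]
  -- existence of a root in [0,1]
  have hroot : ∃ y₀ ∈ Set.Icc (0:ℝ) 1, p * v - y₀ + q * y₀ ^ 3 = 0 := by
    have hcont : ContinuousOn (fun y : ℝ => y - p * v - q * y ^ 3) (Set.Icc 0 1) := by
      fun_prop
    have h01 : (0:ℝ) ≤ 1 := zero_le_one
    have := intermediate_value_Icc h01 hcont
    have hmem : (0:ℝ) ∈ Set.Icc ((fun y : ℝ => y - p * v - q * y ^ 3) 0)
        ((fun y : ℝ => y - p * v - q * y ^ 3) 1) := by
      constructor
      · simp only
        nlinarith [mul_nonneg hp0.le hv0]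
      · simp only
        rw [hq]
        nlinarith [mul_nonneg hp0.le (sub_nonneg.mpr hv1)]
    obtain ⟨y₀, hy₀, hy₀eq⟩ := this hmem
    exact ⟨y₀, hy₀, by simp only at hy₀eq; linarith⟩
  obtain ⟨y₀, ⟨hy₀0, hy₀1⟩, hy₀eq⟩ := hroot
  -- partial sums bounded by any nonneg root
  have hbound : ∀ y : ℝ, 0 ≤ y → p * v - y + q * y ^ 3 = 0 → ∀ N, S N ≤ y := by
    intro y hy hyeq N
    induction N with
    | zero => simpa [hS_def] using hy
    | succ N ih =>
      have h1 : S (N + 1) ≤ p * v + q * (S N) ^ 3 := hstep N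
      have h2 : (S N) ^ 3 ≤ y ^ 3 := pow_le_pow_left₀ (hSnn N) ih 3
      nlinarith [hq0]
  -- summability
  have hsummable : Summable a :=
    summable_of_sum_range_le ha (fun N => hbound y₀ hy₀0 hy₀eq N)
  set βv : ℝ := ∑' n, a n with hβ_def
  have hhs : HasSum a βv := hsummable.hasSum
  have hβ0 : 0 ≤ βv := tsum_nonneg ha
  have hβle : ∀ y : ℝ, 0 ≤ y → p * v - y + q * y ^ 3 = 0 → βv ≤ y := fun y hy hyeq =>
    Summable.tsum_le_of_sum_range_le hsummable (hbound y hy hyeq)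
  have hβ1 : βv ≤ 1 := le_trans (hβle y₀ hy₀0 hy₀eq) hy₀1
  have hTend : Filter.Tendsto S Filter.atTop (nhds βv) := hhs.tendsto_sum_nat
  have hSle : ∀ N, S N ≤ βv := fun N => Summable.sum_le_tsum (range N) (fun n _ => ha n) hsummable
  -- upper: βv ≤ p*v + q*βv^3
  have hub : βv ≤ p * v + q * βv ^ 3 := by
    have hT' : Filter.Tendsto (fun N => S (N + 1)) Filter.atTop (nhds βv) :=
      hTend.comp (Filter.tendsto_add_atTop_nat 1)
    refine le_of_tendsto' hT' fun N => ?_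
    have h1 := hstep N
    have h2 : (S N) ^ 3 ≤ βv ^ 3 := pow_le_pow_left₀ (hSnn N) (hSle N) 3
    nlinarith [hq0]
  -- lower: p*v + q*βv^3 ≤ βv
  have hlb : p * v + q * βv ^ 3 ≤ βv := by
    have hT2 : Filter.Tendsto (fun M => p * v + q * (S M) ^ 3) Filter.atTop
        (nhds (p * v + q * βv ^ 3)) := by
      exact Filter.Tendsto.const_add _ ((hTend.pow 3).const_mul q)
    refine le_of_tendsto' hT2 fun M => ?_
    exact le_trans (hstep2 M) (hSle (3 * M + 2))
  have heqn : p * v - βv + q * βv ^ 3 = 0 := by linarith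
  exact ⟨βv, hhs, ⟨hβ0, hβ1⟩, heqn,
    ⟨⟨hβ0, heqn⟩, fun y hy => hβle y hy.1 hy.2⟩⟩
end
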